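/- Let G be an almost-chordal graph and let C = {v_1, v_2, v_3, v_4} be the vertex set of an induced 4-cycle in G with edges v_1v_2, v_2v_3, v_3v_4, v_4v_1. Let G' be the graph obtained from G by adding the chord v_1v_3. Then G' is almost-chordal, and the set of induced 4-cycles of G' is exactly the set of induced 4-cycles of G other than C; in particular G' has exactly one fewer induced 4-cycle than G. -/
import Mathlib


open SimpleGraph

variable {V : Type*}

/-- `f : ZMod n → V` enumerates the vertices of an induced (chordless) cycle of length `n`:
it is injective and two listed vertices are adjacent iff they are consecutive on the cycle. -/
def IsInducedCycle (G : SimpleGraph V) {n : ℕ} (f : ZMod n → V) : Prop :=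
  Function.Injective f ∧
    ∀ i j : ZMod n, G.Adj (f i) (f j) ↔ (j = i + 1 ∨ i = j + 1)

/-- A graph is chordal if it has no induced cycle of length at least 4. -/
def Chordal (G : SimpleGraph V) : Prop :=
  ∀ n : ℕ, 4 ≤ n → ∀ f : ZMod n → V, ¬ IsInducedCycle G f

/-- A hole is an induced chordless cycle of length at least 5. -/
def HasHole (G : SimpleGraph V) : Prop :=
  ∃ (n : ℕ) (f : ZMod n → V), 5 ≤ n ∧ IsInducedCycle G f

/-- A house: an induced 4-cycle together with a fifth vertex adjacent to exactly two
adjacent vertices of the 4-cycle (as an induced subgraph). -/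
def HasHouse (G : SimpleGraph V) : Prop :=
  ∃ (f : ZMod 4 → V) (e : V), IsInducedCycle G f ∧ (∀ i, e ≠ f i) ∧
    G.Adj e (f 0) ∧ G.Adj e (f 1) ∧ ¬ G.Adj e (f 2) ∧ ¬ G.Adj e (f 3)

/-- `s` is the vertex set of an induced 4-cycle of `G`. -/
def IsC4Set (G : SimpleGraph V) (s : Set V) : Prop :=
  ∃ f : ZMod 4 → V, IsInducedCycle G f ∧ s = Set.range f

/-- Almost-chordal: no hole, no induced house, and any two distinct induced 4-cycles
share at most one vertex. -/
def AlmostChordal (G : SimpleGraph V) : Prop :=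
  ¬ HasHole G ∧ ¬ HasHouse G ∧
    ∀ s t : Set V, IsC4Set G s → IsC4Set G t → s ≠ t → (s ∩ t).Subsingleton

/-- `G` is `k`-connected: more than `k` vertices, and removing fewer than `k` vertices
leaves it connected. -/
def KConnected {W : Type*} [Fintype W] (k : ℕ) (G : SimpleGraph W) : Prop :=
  k < Fintype.card W ∧
    ∀ S : Finset W, S.card < k → (G.induce ((↑S : Set W)ᶜ)).Connected

/-- The contraction `G/uv`: `v` is removed and merged into `u`, whose new neighbourhood is
`(N(u) ∪ N(v)) \ {u, v}`. -/
def contractEdge (G : SimpleGraph V) (u v : V) : SimpleGraph {x : V // x ≠ v} :=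
  SimpleGraph.fromRel fun a b =>
    G.Adj a.1 b.1 ∨ (a.1 = u ∧ G.Adj v b.1) ∨ (b.1 = u ∧ G.Adj v a.1)

/-- `S` is a separator: its removal disconnects `G`. -/
def IsSeparator (G : SimpleGraph V) (S : Finset V) : Prop :=
  ¬ (G.induce ((↑S : Set V)ᶜ)).Preconnected

/-- `S` is a minimal separator: it is a separator and removing any set of fewer than `|S|`
vertices leaves `G` connected. -/
def IsMinimalSeparator (G : SimpleGraph V) (S : Finset V) : Prop :=
  IsSeparator G S ∧
    ∀ S' : Finset V, S'.card < S.card → (G.induce ((↑S' : Set V)ᶜ)).Connected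

/- ### helpers -/

lemma zmod4_cases : ∀ i : ZMod 4, i = 0 ∨ i = 1 ∨ i = 2 ∨ i = 3 := by decide

def c4fun (w0 w1 w2 w3 : V) : ZMod 4 → V := ![w0, w1, w2, w3]

@[simp] lemma c4fun_0 (w0 w1 w2 w3 : V) : c4fun w0 w1 w2 w3 0 = w0 := rfl
@[simp] lemma c4fun_1 (w0 w1 w2 w3 : V) : c4fun w0 w1 w2 w3 1 = w1 := rfl
@[simp] lemma c4fun_2 (w0 w1 w2 w3 : V) : c4fun w0 w1 w2 w3 2 = w2 := rfl
@[simp] lemma c4fun_3 (w0 w1 w2 w3 : V) : c4fun w0 w1 w2 w3 3 = w3 := rfl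

lemma mkC4 (G : SimpleGraph V) (w0 w1 w2 w3 : V)
    (d01 : w0 ≠ w1) (d02 : w0 ≠ w2) (d03 : w0 ≠ w3) (d12 : w1 ≠ w2) (d13 : w1 ≠ w3) (d23 : w2 ≠ w3)
    (e01 : G.Adj w0 w1) (e12 : G.Adj w1 w2) (e23 : G.Adj w2 w3) (e30 : G.Adj w3 w0)
    (n02 : ¬ G.Adj w0 w2) (n13 : ¬ G.Adj w1 w3) :
    IsInducedCycle G (c4fun w0 w1 w2 w3) := by
  constructor
  · intro i j hij
    rcases zmod4_cases i with rfl|rfl|rfl|rfl <;> rcases zmod4_cases j with rfl|rfl|rfl|rfl <;>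
      simp_all <;> simp_all [G.adj_comm]
  · intro i j
    rcases zmod4_cases i with rfl|rfl|rfl|rfl <;> rcases zmod4_cases j with rfl|rfl|rfl|rfl <;>
      simp_all [G.adj_comm, G.loopless] <;> decide

lemma range_c4fun (w0 w1 w2 w3 : V) :
    Set.range (c4fun w0 w1 w2 w3) = {w0, w1, w2, w3} := by
  ext v
  constructor
  · rintro ⟨i, rfl⟩
    rcases zmod4_cases i with rfl|rfl|rfl|rfl <;> simp
  · rintro (rfl|rfl|rfl|rfl)
    exacts [⟨0, rfl⟩, ⟨1, rfl⟩, ⟨2, rfl⟩, ⟨3, rfl⟩]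

lemma mem_range_iff (g : ZMod 4 → V) (v : V) :
    v ∈ Set.range g ↔ v = g 0 ∨ v = g 1 ∨ v = g 2 ∨ v = g 3 := by
  constructor
  · rintro ⟨i, rfl⟩; rcases zmod4_cases i with rfl|rfl|rfl|rfl <;> simp
  · rintro (rfl|rfl|rfl|rfl) <;> exact ⟨_, rfl⟩

lemma mkHouse (G : SimpleGraph V) (w0 w1 w2 w3 e : V)
    (d01 : w0 ≠ w1) (d02 : w0 ≠ w2) (d03 : w0 ≠ w3) (d12 : w1 ≠ w2) (d13 : w1 ≠ w3) (d23 : w2 ≠ w3)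
    (e01 : G.Adj w0 w1) (e12 : G.Adj w1 w2) (e23 : G.Adj w2 w3) (e30 : G.Adj w3 w0)
    (n02 : ¬ G.Adj w0 w2) (n13 : ¬ G.Adj w1 w3)
    (he0 : e ≠ w0) (he1 : e ≠ w1) (he2 : e ≠ w2) (he3 : e ≠ w3)
    (a0 : G.Adj e w0) (a1 : G.Adj e w1) (a2 : ¬ G.Adj e w2) (a3 : ¬ G.Adj e w3) :
    HasHouse G := by
  refine ⟨c4fun w0 w1 w2 w3, e,
    mkC4 G w0 w1 w2 w3 d01 d02 d03 d12 d13 d23 e01 e12 e23 e30 n02 n13, ?_, a0, a1, a2, a3⟩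
  intro i
  rcases zmod4_cases i with rfl|rfl|rfl|rfl <;> simpa

/-- Two induced 4-cycle sets sharing two distinct vertices are equal. -/
lemma c4_eq {G : SimpleGraph V} (hG : AlmostChordal G) {s t : Set V}
    (hs : IsC4Set G s) (ht : IsC4Set G t) {x y : V} (hxy : x ≠ y)
    (hxs : x ∈ s) (hxt : x ∈ t) (hys : y ∈ s) (hyt : y ∈ t) : s = t := by
  by_contra hne
  exact hxy (hG.2.2 s t hs ht hne ⟨hxs, hxt⟩ ⟨hys, hyt⟩)

lemma cyc_adj {G : SimpleGraph V} {n : ℕ} {g : ZMod n → V} (hg : IsInducedCycle G g)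
    (i : ZMod n) : G.Adj (g i) (g (i + 1)) := (hg.2 i (i + 1)).mpr (Or.inl rfl)

lemma cyc_ne {G : SimpleGraph V} {n : ℕ} {g : ZMod n → V} (hg : IsInducedCycle G g)
    {i j : ZMod n} (h : i ≠ j) : g i ≠ g j := fun e => h (hg.1 e)

/- ### ZMod casting bridges -/

lemma zmod_cast_inj {n : ℕ} (s t : ℕ) (hs : s < n) (ht : t < n)
    (h : (s : ZMod n) = t) : s = t := by
  haveI : NeZero n := ⟨by omega⟩
  have := congrArg ZMod.val h
  rwa [ZMod.val_cast_of_lt hs, ZMod.val_cast_of_lt ht] at this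

lemma zmod_consec {n : ℕ} (hn : 2 ≤ n) {s t : ℕ} (hs : s < n) (ht : t < n) :
    ((t : ZMod n) = (s : ZMod n) + 1) ↔ (t = s + 1 ∨ (s = n - 1 ∧ t = 0)) := by
  haveI : NeZero n := ⟨by omega⟩
  have h1 : ((s : ZMod n) + 1) = ((s + 1 : ℕ) : ZMod n) := by push_cast; ring
  rw [h1, ZMod.natCast_eq_natCast_iff]
  unfold Nat.ModEq
  rcases lt_or_eq_of_le (Nat.succ_le_of_lt hs) with h | h
  · rw [Nat.mod_eq_of_lt ht, Nat.mod_eq_of_lt h]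
    omega
  · rw [Nat.mod_eq_of_lt ht, show s + 1 = n from h, Nat.mod_self]
    omega

/-- `j = i + 1` in `ZMod n` in terms of `val`s. -/
lemma zmod_succ_val {n : ℕ} (hn : 2 ≤ n) (i j : ZMod n) :
    (j = i + 1) ↔ (j.val = i.val + 1 ∨ (i.val = n - 1 ∧ j.val = 0)) := by
  haveI : NeZero n := ⟨by omega⟩
  have hi : ((i.val : ℕ) : ZMod n) = i := by rw [ZMod.natCast_val, ZMod.cast_id]
  have hj : ((j.val : ℕ) : ZMod n) = j := by rw [ZMod.natCast_val, ZMod.cast_id]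
  rw [← hi, ← hj, zmod_consec hn (ZMod.val_lt i) (ZMod.val_lt j)]
  rw [ZMod.val_cast_of_lt (ZMod.val_lt i), ZMod.val_cast_of_lt (ZMod.val_lt j)]

/-- Build a hole from a chordless path `q 0, …, q k` (`k ≥ 3`) plus a hub `b`
adjacent exactly to the two endpoints. -/
lemma mkHole (G : SimpleGraph V) (k : ℕ) (hk : 3 ≤ k) (q : ℕ → V) (b : V)
    (hinj : ∀ s t, s ≤ k → t ≤ k → q s = q t → s = t)
    (hadj : ∀ s t, s ≤ k → t ≤ k → (G.Adj (q s) (q t) ↔ (t = s + 1 ∨ s = t + 1)))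
    (hb : ∀ s, s ≤ k → (G.Adj b (q s) ↔ (s = 0 ∨ s = k)))
    (hbne : ∀ s, s ≤ k → b ≠ q s) : HasHole G := by
  haveI : NeZero (k + 2) := ⟨by omega⟩
  have h2 : 2 ≤ k + 2 := by omega
  refine ⟨k + 2, fun i => if i.val = 0 then b else q (i.val - 1), by omega, ?_, ?_⟩
  · intro i j hij
    have hvi : i.val < k + 2 := ZMod.val_lt i
    have hvj : j.val < k + 2 := ZMod.val_lt j
    have : i.val = j.val := by
      by_cases h1 : i.val = 0 <;> by_cases h2 : j.val = 0 <;> simp [h1, h2] at hij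
      · omega
      · exact absurd hij (hbne _ (by omega))
      · exact absurd hij.symm (hbne _ (by omega))
      · have := hinj _ _ (by omega) (by omega) hij; omega
    exact ZMod.val_injective _ this
  · intro i j
    have hvi : i.val < k + 2 := ZMod.val_lt i
    have hvj : j.val < k + 2 := ZMod.val_lt j
    rw [zmod_succ_val h2, zmod_succ_val h2]
    beta_reduce
    by_cases h1 : i.val = 0 <;> by_cases hh2 : j.val = 0
    · rw [if_pos h1, if_pos hh2]
      simp only [SimpleGraph.irrefl, false_iff]
      omega
    · rw [if_pos h1, if_neg hh2, hb _ (by omega)]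
      omega
    · rw [if_neg h1, if_pos hh2, G.adj_comm, hb _ (by omega)]
      omega
    · rw [if_neg h1, if_neg hh2, hadj _ _ (by omega) (by omega)]
      omega

lemma cyc_rot {G : SimpleGraph V} {n : ℕ} {g : ZMod n → V} (hg : IsInducedCycle G g)
    (t : ZMod n) : IsInducedCycle G (fun k => g (k + t)) := by
  refine ⟨fun i j hij => ?_, fun i j => ?_⟩
  · have := hg.1 hij
    simpa using this
  · rw [hg.2 (i + t) (j + t)]
    constructor
    · rintro (h | h)
      · exact Or.inl (by linear_combination h)
      · exact Or.inr (by linear_combination h)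
    · rintro (h | h)
      · exact Or.inl (by linear_combination h)
      · exact Or.inr (by linear_combination h)

lemma cyc_refl {G : SimpleGraph V} {n : ℕ} {g : ZMod n → V} (hg : IsInducedCycle G g)
    (t : ZMod n) : IsInducedCycle G (fun k => g (t - k)) := by
  refine ⟨fun i j hij => ?_, fun i j => ?_⟩
  · have := hg.1 hij
    have h2 : t - i = t - j := by simpa using this
    linear_combination -h2
  · rw [hg.2 (t - i) (t - j)]
    constructor
    · rintro (h | h)
      · exact Or.inr (by linear_combination h)
      · exact Or.inl (by linear_combination h)
    · rintro (h | h)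
      · exact Or.inr (by linear_combination h)
      · exact Or.inl (by linear_combination h)

lemma range_rot {n : ℕ} (g : ZMod n → V) (t : ZMod n) :
    Set.range (fun k => g (k + t)) = Set.range g := by
  have : (fun k : ZMod n => g (k + t)) = g ∘ (Equiv.addRight t) := rfl
  rw [this, (Equiv.addRight t).surjective.range_comp]

lemma range_refl {n : ℕ} (g : ZMod n → V) (t : ZMod n) :
    Set.range (fun k => g (t - k)) = Set.range g := by
  have : (fun k : ZMod n => g (t - k)) = g ∘ (Equiv.subLeft t) := rfl
  rw [this, (Equiv.subLeft t).surjective.range_comp]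

/-- Adjacency in the graph with the added chord. -/
lemma adj_sup_edge {G : SimpleGraph V} {a c : V} (hac : a ≠ c) (x y : V) :
    (G ⊔ SimpleGraph.fromEdgeSet {s(a, c)}).Adj x y ↔
      (G.Adj x y ∨ ((x = a ∧ y = c) ∨ (x = c ∧ y = a))) := by
  simp only [SimpleGraph.sup_adj, SimpleGraph.fromEdgeSet_adj, Set.mem_singleton_iff,
    Sym2.eq_iff]
  constructor
  · rintro (h | ⟨(⟨rfl, rfl⟩ | ⟨rfl, rfl⟩), hne⟩)
    · exact Or.inl h
    · exact Or.inr (Or.inl ⟨rfl, rfl⟩)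
    · exact Or.inr (Or.inr ⟨rfl, rfl⟩)
  · rintro (h | (⟨rfl, rfl⟩ | ⟨rfl, rfl⟩))
    · exact Or.inl h
    · exact Or.inr ⟨Or.inl ⟨rfl, rfl⟩, hac⟩
    · exact Or.inr ⟨Or.inr ⟨rfl, rfl⟩, hac.symm⟩

/-- All the basic facts about an induced 4-cycle. -/
lemma c4_facts {G : SimpleGraph V} {f : ZMod 4 → V} (hf : IsInducedCycle G f) :
    G.Adj (f 0) (f 1) ∧ G.Adj (f 1) (f 2) ∧ G.Adj (f 2) (f 3) ∧ G.Adj (f 3) (f 0) ∧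
    ¬ G.Adj (f 0) (f 2) ∧ ¬ G.Adj (f 1) (f 3) ∧
    f 0 ≠ f 1 ∧ f 0 ≠ f 2 ∧ f 0 ≠ f 3 ∧ f 1 ≠ f 2 ∧ f 1 ≠ f 3 ∧ f 2 ≠ f 3 := by
  refine ⟨(hf.2 0 1).mpr (by decide), (hf.2 1 2).mpr (by decide), (hf.2 2 3).mpr (by decide),
    (hf.2 3 0).mpr (by decide), fun h => ?_, fun h => ?_,
    cyc_ne hf (by decide), cyc_ne hf (by decide), cyc_ne hf (by decide),
    cyc_ne hf (by decide), cyc_ne hf (by decide), cyc_ne hf (by decide)⟩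
  · have := (hf.2 0 2).mp h; revert this; decide
  · have := (hf.2 1 3).mp h; revert this; decide

lemma adj_q1 {G : SimpleGraph V} (hG : AlmostChordal G) {f : ZMod 4 → V}
    (hf : IsInducedCycle G f) (n : ℕ) (hn : 5 ≤ n) (q : ℕ → V)
    (hinj : ∀ s t, s ≤ n - 1 → t ≤ n - 1 → q s = q t → s = t)
    (hq0 : q 0 = f 2) (hqn : q (n - 1) = f 0)
    (hadj : ∀ s t, s ≤ n - 1 → t ≤ n - 1 → (G.Adj (q s) (q t) ↔ (t = s + 1 ∨ s = t + 1)))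
    (hbd : ∀ s, s ≤ n - 1 → q s ≠ f 1 ∧ q s ≠ f 3)
    (u : V) (hu : u = f 1 ∨ u = f 3) : G.Adj u (q 1) := by
  classical
  obtain ⟨hab, hbc, hcd, hda, hnac, hnbd, d01, d02, d03, d12, d13, d23⟩ := c4_facts hf
  have hua : G.Adj u (f 0) := by rcases hu with rfl | rfl; exacts [hab.symm, hda]
  have huc : G.Adj u (f 2) := by rcases hu with rfl | rfl; exacts [hbc, hcd.symm]
  have hune : ∀ s, s ≤ n - 1 → u ≠ q s := by
    intro s hs h
    rcases hu with rfl | rfl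
    exacts [(hbd s hs).1 h.symm, (hbd s hs).2 h.symm]
  have huf : u ∈ Set.range f := by rcases hu with rfl | rfl; exacts [⟨1, rfl⟩, ⟨3, rfl⟩]
  have huc2 : u ≠ f 2 := by rcases hu with rfl | rfl; exacts [d12, d23.symm]
  by_contra hnadj1
  set N := (Finset.Icc 1 (n - 2)).filter (fun s => G.Adj u (q s)) with hN
  rcases N.eq_empty_or_nonempty with hemp | hne
  · have hno : ∀ s, 1 ≤ s → s ≤ n - 2 → ¬ G.Adj u (q s) := by
      intro s h1 h2 h
      have hmem : s ∈ N := Finset.mem_filter.mpr ⟨Finset.mem_Icc.mpr ⟨h1, h2⟩, h⟩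
      rw [hemp] at hmem
      exact absurd hmem (Finset.notMem_empty s)
    refine hG.1 (mkHole G (n - 1) (by omega) q u hinj hadj ?_ hune)
    intro s hs
    constructor
    · intro h
      by_contra hc
      push_neg at hc
      exact hno s (by omega) (by omega) h
    · rintro (rfl | rfl)
      · rw [hq0]; exact huc
      · rw [hqn]; exact hua
  · set m := N.min' hne with hm
    have hmN : m ∈ N := N.min'_mem hne
    obtain ⟨hm12, hmadj⟩ := Finset.mem_filter.mp hmN
    rw [Finset.mem_Icc] at hm12
    have hmin : ∀ t, 1 ≤ t → t < m → ¬ G.Adj u (q t) := by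
      intro t h1 h2 ha
      have ht : t ∈ N := Finset.mem_filter.mpr ⟨Finset.mem_Icc.mpr ⟨h1, by omega⟩, ha⟩
      have := N.min'_le t ht
      omega
    by_cases hm1 : m = 1
    · exact hnadj1 (hm1 ▸ hmadj)
    by_cases hm3 : 3 ≤ m
    · refine hG.1 (mkHole G m hm3 q u
        (fun s t hs ht => hinj s t (by omega) (by omega))
        (fun s t hs ht => hadj s t (by omega) (by omega)) ?_
        (fun s hs => hune s (by omega)))
      intro s hs
      constructor
      · intro h
        by_contra hc
        push_neg at hc
        exact hmin s (by omega) (by omega) h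
      · rintro (rfl | rfl)
        · rw [hq0]; exact huc
        · exact hmadj
    · have hm2 : m = 2 := by omega
      rw [hm2] at hmadj
      have hq01 : G.Adj (q 0) (q 1) := (hadj 0 1 (by omega) (by omega)).mpr (by omega)
      have hq12 : G.Adj (q 1) (q 2) := (hadj 1 2 (by omega) (by omega)).mpr (by omega)
      have hnq02 : ¬ G.Adj (q 0) (q 2) := fun h => by
        have := (hadj 0 2 (by omega) (by omega)).mp h; omega
      have hqne : ∀ s t : ℕ, s ≤ n - 1 → t ≤ n - 1 → s ≠ t → q s ≠ q t := by
        intro s t hs ht hst h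
        exact hst (hinj s t hs ht h)
      have hcyc := mkC4 G u (q 0) (q 1) (q 2)
        (hune 0 (by omega)) (hune 1 (by omega)) (hune 2 (by omega))
        (hqne 0 1 (by omega) (by omega) (by omega)) (hqne 0 2 (by omega) (by omega) (by omega))
        (hqne 1 2 (by omega) (by omega) (by omega))
        (by rw [hq0]; exact huc) hq01 hq12 hmadj.symm
        hnadj1 hnq02
      have hset : IsC4Set G {u, q 0, q 1, q 2} := ⟨_, hcyc, (range_c4fun _ _ _ _).symm⟩
      have heq : Set.range f = {u, q 0, q 1, q 2} :=
        c4_eq hG ⟨f, hf, rfl⟩ hset huc2 huf (by simp) ⟨2, rfl⟩ (by rw [← hq0]; simp)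
      have hq1f : q 1 ∈ Set.range f := heq ▸ (by simp : q 1 ∈ ({u, q 0, q 1, q 2} : Set V))
      rcases (mem_range_iff f (q 1)).mp hq1f with h | h | h | h
      · have := hinj 1 (n - 1) (by omega) (by omega) (h.trans hqn.symm); omega
      · exact (hbd 1 (by omega)).1 h
      · have := hinj 1 0 (by omega) (by omega) (h.trans hq0.symm); omega
      · exact (hbd 1 (by omega)).2 h

lemma adj_all {G : SimpleGraph V} (hG : AlmostChordal G) {f : ZMod 4 → V}
    (hf : IsInducedCycle G f) (n : ℕ) (hn : 5 ≤ n) (q : ℕ → V)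
    (hinj : ∀ s t, s ≤ n - 1 → t ≤ n - 1 → q s = q t → s = t)
    (hq0 : q 0 = f 2) (hqn : q (n - 1) = f 0)
    (hadj : ∀ s t, s ≤ n - 1 → t ≤ n - 1 → (G.Adj (q s) (q t) ↔ (t = s + 1 ∨ s = t + 1)))
    (hbd : ∀ s, s ≤ n - 1 → q s ≠ f 1 ∧ q s ≠ f 3)
    (u : V) (hu : u = f 1 ∨ u = f 3) :
    ∀ s, 1 ≤ s → s ≤ n - 2 → G.Adj u (q s) := by
  classical
  obtain ⟨hab, hbc, hcd, hda, hnac, hnbd, d01, d02, d03, d12, d13, d23⟩ := c4_facts hf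
  have huc : G.Adj u (f 2) := by rcases hu with rfl | rfl; exacts [hbc, hcd.symm]
  have hune : ∀ s, s ≤ n - 1 → u ≠ q s := by
    intro s hs h
    rcases hu with rfl | rfl
    exacts [(hbd s hs).1 h.symm, (hbd s hs).2 h.symm]
  -- adjacency to `q (n-2)` via the reversed path
  have htop : G.Adj u (q (n - 2)) := by
    have h02 : f ((0 : ZMod 4) + 2) = f 2 := rfl
    have h22 : f ((2 : ZMod 4) + 2) = f 0 := congrArg f (by decide)
    have h12 : f ((1 : ZMod 4) + 2) = f 3 := congrArg f (by decide)
    have h32 : f ((3 : ZMod 4) + 2) = f 1 := congrArg f (by decide)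
    have hres := adj_q1 hG (cyc_rot hf 2) n hn (fun s => q (n - 1 - s))
      (fun s t hs ht h => by have := hinj _ _ (by omega) (by omega) h; omega)
      (by simpa [h22] using hqn)
      (by simpa [Nat.sub_self] using hq0)
      (fun s t hs ht => by
        rw [hadj _ _ (by omega) (by omega)]
        omega)
      (fun s hs => by
        refine ⟨?_, ?_⟩
        · rw [h12]; exact (hbd _ (by omega)).2
        · rw [h32]; exact (hbd _ (by omega)).1)
      u (by rcases hu with rfl | rfl
            · right; rw [h32]
            · left; rw [h12])
    simpa [show n - 1 - 1 = n - 2 by omega] using hres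
  intro s
  induction s using Nat.strong_induction_on with
  | _ s IH =>
    intro hs1 hs2
    by_cases hs1' : s = 1
    · subst hs1'
      exact adj_q1 hG hf n hn q hinj hq0 hqn hadj hbd u hu
    have hs2' : 2 ≤ s := by omega
    have hlow : ∀ t, t ≤ s - 1 → G.Adj u (q t) := by
      intro t ht
      rcases Nat.eq_zero_or_pos t with rfl | htpos
      · rw [hq0]; exact huc
      · exact IH t (by omega) (by omega) (by omega)
    set A := (Finset.Icc s (n - 2)).filter (fun t => G.Adj u (q t)) with hA
    have hAne : A.Nonempty :=
      ⟨n - 2, Finset.mem_filter.mpr ⟨Finset.mem_Icc.mpr ⟨by omega, le_refl _⟩, htop⟩⟩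
    set m' := A.min' hAne with hm'def
    have hm'A : m' ∈ A := A.min'_mem hAne
    obtain ⟨hm'12, hm'adj⟩ := Finset.mem_filter.mp hm'A
    rw [Finset.mem_Icc] at hm'12
    have hmin : ∀ t, s ≤ t → t < m' → ¬ G.Adj u (q t) := by
      intro t h1 h2 ha
      have ht : t ∈ A := Finset.mem_filter.mpr ⟨Finset.mem_Icc.mpr ⟨h1, by omega⟩, ha⟩
      have := A.min'_le t ht
      omega
    by_cases hm's : m' = s
    · rwa [hm's] at hm'adj
    by_cases hk3 : s + 2 ≤ m'
    · -- hole on the segment [s-1, m']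
      exact absurd (mkHole G (m' - (s - 1)) (by omega) (fun j => q (s - 1 + j)) u
        (fun x y hx hy h => by have := hinj _ _ (by omega) (by omega) h; omega)
        (fun x y hx hy => by rw [hadj _ _ (by omega) (by omega)]; omega)
        (fun j hj => by
          constructor
          · intro h
            by_contra hc
            push_neg at hc
            exact hmin (s - 1 + j) (by omega) (by omega) h
          · rintro (rfl | rfl)
            · simpa using hlow (s - 1) (le_refl _)
            · simpa [show s - 1 + (m' - (s - 1)) = m' from by omega] using hm'adj)
        (fun j hj => hune _ (by omega))) hG.1
    · -- m' = s + 1 : house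
      have hm' : m' = s + 1 := by omega
      rw [hm'] at hm'adj
      have hqne : ∀ x y : ℕ, x ≤ n - 1 → y ≤ n - 1 → x ≠ y → q x ≠ q y := by
        intro x y hx hy hxy h
        exact hxy (hinj x y hx hy h)
      refine absurd (mkHouse G u (q (s - 1)) (q s) (q (s + 1)) (q (s - 2))
        (hune _ (by omega)) (hune _ (by omega)) (hune _ (by omega))
        (hqne _ _ (by omega) (by omega) (by omega)) (hqne _ _ (by omega) (by omega) (by omega))
        (hqne _ _ (by omega) (by omega) (by omega))
        (hlow (s - 1) (le_refl _))
        ((hadj (s - 1) s (by omega) (by omega)).mpr (by omega))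
        ((hadj s (s + 1) (by omega) (by omega)).mpr (by omega))
        hm'adj.symm
        (hmin s (le_refl _) (by omega))
        (fun h => by have := (hadj (s - 1) (s + 1) (by omega) (by omega)).mp h; omega)
        (fun h => (hune _ (by omega)) h.symm)
        (hqne _ _ (by omega) (by omega) (by omega))
        (hqne _ _ (by omega) (by omega) (by omega))
        (hqne _ _ (by omega) (by omega) (by omega))
        ((hlow (s - 2) (by omega)).symm)
        ((hadj (s - 2) (s - 1) (by omega) (by omega)).mpr (by omega))
        (fun h => by have := (hadj (s - 2) s (by omega) (by omega)).mp h; omega)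
        (fun h => by have := (hadj (s - 2) (s + 1) (by omega) (by omega)).mp h; omega))
        hG.2.1

/-- There is no chordless path from `f 2` to `f 0` of length `≥ 4` avoiding the
4-cycle's other vertices, in an almost chordal graph. -/
lemma no_path {G : SimpleGraph V} (hG : AlmostChordal G) {f : ZMod 4 → V}
    (hf : IsInducedCycle G f) (n : ℕ) (hn : 5 ≤ n) (q : ℕ → V)
    (hinj : ∀ s t, s ≤ n - 1 → t ≤ n - 1 → q s = q t → s = t)
    (hq0 : q 0 = f 2) (hqn : q (n - 1) = f 0)
    (hadj : ∀ s t, s ≤ n - 1 → t ≤ n - 1 → (G.Adj (q s) (q t) ↔ (t = s + 1 ∨ s = t + 1)))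
    (hbd : ∀ s, s ≤ n - 1 → q s ≠ f 1 ∧ q s ≠ f 3) : False := by
  obtain ⟨hab, hbc, hcd, hda, hnac, hnbd, d01, d02, d03, d12, d13, d23⟩ := c4_facts hf
  have hb1 : G.Adj (f 1) (q 1) :=
    adj_all hG hf n hn q hinj hq0 hqn hadj hbd (f 1) (Or.inl rfl) 1 (by omega) (by omega)
  have hd1 : G.Adj (f 3) (q 1) :=
    adj_all hG hf n hn q hinj hq0 hqn hadj hbd (f 3) (Or.inr rfl) 1 (by omega) (by omega)
  have hq1a : q 1 ≠ f 0 := fun h => by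
    have := hinj 1 (n - 1) (by omega) (by omega) (h.trans hqn.symm); omega
  have hq1c : q 1 ≠ f 2 := fun h => by
    have := hinj 1 0 (by omega) (by omega) (h.trans hq0.symm); omega
  have hnaq1 : ¬ G.Adj (f 0) (q 1) := fun h => by
    rw [← hqn, G.adj_comm] at h
    have := (hadj 1 (n - 1) (by omega) (by omega)).mp h
    omega
  have hcyc := mkC4 G (f 0) (f 1) (q 1) (f 3)
    d01 (fun h => hq1a h.symm) d03 (fun h => (hbd 1 (by omega)).1 h.symm) d13
    ((hbd 1 (by omega)).2)
    hab hb1 hd1.symm hda hnaq1 hnbd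
  have hset : IsC4Set G {f 0, f 1, q 1, f 3} := ⟨_, hcyc, (range_c4fun _ _ _ _).symm⟩
  have heq : Set.range f = {f 0, f 1, q 1, f 3} :=
    c4_eq hG ⟨f, hf, rfl⟩ hset d01 ⟨0, rfl⟩ (by simp) ⟨1, rfl⟩ (by simp)
  have hq1f : q 1 ∈ Set.range f := heq ▸ (by simp : q 1 ∈ ({f 0, f 1, q 1, f 3} : Set V))
  rcases (mem_range_iff f (q 1)).mp hq1f with h | h | h | h
  · exact hq1a h
  · exact (hbd 1 (by omega)).1 h
  · exact hq1c h
  · exact (hbd 1 (by omega)).2 h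

/-- Core: an induced cycle of `G ⊔ {f0f2}` of length `≥ 5` using the new edge
(`h i = f 0`, `h (i+1) = f 2`) is impossible. -/
lemma hole_core {G : SimpleGraph V} (hG : AlmostChordal G) {f : ZMod 4 → V}
    (hf : IsInducedCycle G f) (n : ℕ) (hn : 5 ≤ n) (h : ZMod n → V)
    (hh : IsInducedCycle (G ⊔ SimpleGraph.fromEdgeSet {s(f 0, f 2)}) h)
    (i : ZMod n) (hi0 : h i = f 0) (hi1 : h (i + 1) = f 2) : False := by
  haveI : NeZero n := ⟨by omega⟩
  obtain ⟨hab, hbc, hcd, hda, hnac, hnbd, d01, d02, d03, d12, d13, d23⟩ := c4_facts hf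
  have adj' := adj_sup_edge (G := G) d02
  set q : ℕ → V := fun s => h (i + 1 + (s : ZMod n)) with hq
  have casteq : ∀ s t : ℕ, s ≤ n - 1 → t ≤ n - 1 → ((s : ZMod n) = (t : ZMod n) ↔ s = t) :=
    fun s t hs ht => ⟨zmod_cast_inj s t (by omega) (by omega), fun e => by rw [e]⟩
  have cancel : ∀ x y : ZMod n, (i + 1 + x = i + 1 + y) ↔ x = y :=
    fun x y => ⟨fun e => by linear_combination e, fun e => by rw [e]⟩
  have hc1 : ((n - 1 : ℕ) : ZMod n) = -1 := by
    rw [Nat.cast_sub (by omega : 1 ≤ n), ZMod.natCast_self]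
    push_cast
    ring
  have hc2 : ((n - 2 : ℕ) : ZMod n) = -2 := by
    rw [Nat.cast_sub (by omega : 2 ≤ n), ZMod.natCast_self]
    push_cast
    ring
  -- identification of special positions
  have hqa : ∀ s : ℕ, s ≤ n - 1 → (q s = f 0 ↔ s = n - 1) := by
    intro s hs
    rw [← hi0, hq]
    constructor
    · intro e
      have e2 : i + 1 + (s : ZMod n) = i + 1 + (-1) := by
        rw [hh.1 e]; ring
      rw [cancel, ← hc1, casteq s (n - 1) hs (by omega)] at e2
      exact e2
    · rintro rfl
      refine congrArg h ?_
      rw [hc1]; ring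
  have hqc : ∀ s : ℕ, s ≤ n - 1 → (q s = f 2 ↔ s = 0) := by
    intro s hs
    rw [← hi1, hq]
    constructor
    · intro e
      have e2 : i + 1 + (s : ZMod n) = i + 1 + 0 := by rw [hh.1 e]; ring
      rw [cancel] at e2
      have : ((0 : ℕ) : ZMod n) = 0 := by push_cast; ring
      rw [← this, casteq s 0 hs (by omega)] at e2
      exact e2
    · rintro rfl
      refine congrArg h ?_
      push_cast
      ring
  -- the `G`-adjacency along the path
  have hadjq : ∀ s t, s ≤ n - 1 → t ≤ n - 1 →
      (G.Adj (q s) (q t) ↔ (t = s + 1 ∨ s = t + 1)) := by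
    intro s t hs ht
    have hGadj' : (G ⊔ SimpleGraph.fromEdgeSet {s(f 0, f 2)}).Adj (q s) (q t) ↔
        ((t = s + 1 ∨ (s = n - 1 ∧ t = 0)) ∨ (s = t + 1 ∨ (t = n - 1 ∧ s = 0))) := by
      rw [hq]
      rw [hh.2 (i + 1 + (s : ZMod n)) (i + 1 + (t : ZMod n))]
      have e1 : i + 1 + (s : ZMod n) + 1 = i + 1 + ((s : ZMod n) + 1) := by ring
      have e2 : i + 1 + (t : ZMod n) + 1 = i + 1 + ((t : ZMod n) + 1) := by ring
      rw [e1, e2, cancel, cancel,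
        zmod_consec (by omega) (by omega : s < n) (by omega : t < n),
        zmod_consec (by omega) (by omega : t < n) (by omega : s < n)]
    by_cases hcase : (s = n - 1 ∧ t = 0) ∨ (t = n - 1 ∧ s = 0)
    · constructor
      · intro hGst
        exfalso
        rcases hcase with ⟨e1, e2⟩ | ⟨e1, e2⟩
        · rw [(hqa s hs).mpr e1, (hqc t ht).mpr e2] at hGst
          exact hnac hGst
        · rw [(hqa t ht).mpr e1, (hqc s hs).mpr e2] at hGst
          exact hnac hGst.symm
      · intro hrl
        exfalso
        omega
    · constructor
      · intro hGst
        have := hGadj'.mp (SimpleGraph.sup_adj _ _ _ _ |>.mpr (Or.inl hGst))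
        omega
      · intro hrl
        have hsup := hGadj'.mpr (by omega)
        rcases (adj' (q s) (q t)).mp hsup with hg | ⟨e1, e2⟩ | ⟨e1, e2⟩
        · exact hg
        · rw [hqa s hs] at e1
          rw [hqc t ht] at e2
          omega
        · rw [hqc s hs] at e1
          rw [hqa t ht] at e2
          omega
  refine no_path hG hf n hn q ?_ ?_ ?_ hadjq ?_
  · intro s t hs ht e
    have e2 : i + 1 + (s : ZMod n) = i + 1 + (t : ZMod n) := hh.1 e
    rw [cancel, casteq s t hs ht] at e2
    exact e2
  · exact (hqc 0 (by omega)).mpr rfl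
  · exact (hqa (n - 1) (by omega)).mpr rfl
  · -- the path avoids f 1 and f 3
    intro s hs
    have key : ∀ v : V, G.Adj v (f 0) → G.Adj v (f 2) → q s ≠ v := by
      intro v hva hvc hqv
      have h1 : (G ⊔ SimpleGraph.fromEdgeSet {s(f 0, f 2)}).Adj (q s) (h i) := by
        rw [hqv, hi0]; exact SimpleGraph.sup_adj _ _ _ _ |>.mpr (Or.inl hva)
      have h2 : (G ⊔ SimpleGraph.fromEdgeSet {s(f 0, f 2)}).Adj (q s) (h (i + 1)) := by
        rw [hqv, hi1]; exact SimpleGraph.sup_adj _ _ _ _ |>.mpr (Or.inl hvc)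
      have e1 := (hh.2 (i + 1 + (s : ZMod n)) i).mp h1
      have e2 := (hh.2 (i + 1 + (s : ZMod n)) (i + 1)).mp h2
      have k1 : s = n - 2 ∨ s = 0 := by
        rcases e1 with hx | hx
        · left
          have hcs : (s : ZMod n) = -2 := by linear_combination -hx
          rw [← hc2] at hcs
          exact (casteq s (n - 2) hs (by omega)).mp hcs
        · right
          have hcs : (s : ZMod n) = 0 := by linear_combination hx
          have : (s : ZMod n) = ((0 : ℕ) : ZMod n) := by rw [Nat.cast_zero]; exact hcs
          exact (casteq s 0 hs (by omega)).mp this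
      have k2 : s = n - 1 ∨ s = 1 := by
        rcases e2 with hx | hx
        · left
          have hcs : (s : ZMod n) = -1 := by linear_combination -hx
          rw [← hc1] at hcs
          exact (casteq s (n - 1) hs (by omega)).mp hcs
        · right
          have hcs : (s : ZMod n) = ((1 : ℕ) : ZMod n) := by
            rw [Nat.cast_one]; linear_combination hx
          exact (casteq s 1 hs (by omega)).mp hcs
      omega
    exact ⟨key (f 1) hab.symm hbc, key (f 3) hda hcd.symm⟩

lemma no_hole' {G : SimpleGraph V} (hG : AlmostChordal G) {f : ZMod 4 → V}
    (hf : IsInducedCycle G f) : ¬ HasHole (G ⊔ SimpleGraph.fromEdgeSet {s(f 0, f 2)}) := by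
  rintro ⟨n, h, hn5, hh⟩
  obtain ⟨hab, hbc, hcd, hda, hnac, hnbd, d01, d02, d03, d12, d13, d23⟩ := c4_facts hf
  have adj' := adj_sup_edge (G := G) d02
  by_cases hboth : (∃ i, h i = f 0) ∧ (∃ j, h j = f 2)
  · obtain ⟨⟨i, hi⟩, ⟨j, hj⟩⟩ := hboth
    have hadjac : (G ⊔ SimpleGraph.fromEdgeSet {s(f 0, f 2)}).Adj (h i) (h j) := by
      rw [hi, hj]
      exact (adj' _ _).mpr (Or.inr (Or.inl ⟨rfl, rfl⟩))
    rcases (hh.2 i j).mp hadjac with e | e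
    · exact hole_core hG hf n hn5 h hh i hi (by rw [← e]; exact hj)
    · refine hole_core hG hf n hn5 (fun k => h (i + i - k)) (cyc_refl hh (i + i)) i ?_ ?_
      · show h (i + i - i) = f 0
        rw [show i + i - i = i from by ring]
        exact hi
      · show h (i + i - (i + 1)) = f 2
        rw [show i + i - (i + 1) = j from by rw [e]; ring]
        exact hj
  · rw [not_and_or] at hboth
    refine hG.1 ⟨n, h, hn5, hh.1, fun i j => ?_⟩
    rw [← hh.2 i j]
    constructor
    · intro hx
      exact SimpleGraph.sup_adj _ _ _ _ |>.mpr (Or.inl hx)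
    · intro hx
      rcases (adj' _ _).mp hx with hg | ⟨e1, e2⟩ | ⟨e1, e2⟩
      · exact hg
      · exfalso
        rcases hboth with hA | hB
        · exact hA ⟨i, e1⟩
        · exact hB ⟨j, e2⟩
      · exfalso
        rcases hboth with hA | hB
        · exact hA ⟨j, e2⟩
        · exact hB ⟨i, e1⟩

lemma mkHole5 (G : SimpleGraph V) (v0 v1 v2 v3 v4 : V)
    (d01 : v0 ≠ v1) (d02 : v0 ≠ v2) (d03 : v0 ≠ v3) (d04 : v0 ≠ v4)
    (d12 : v1 ≠ v2) (d13 : v1 ≠ v3) (d14 : v1 ≠ v4) (d23 : v2 ≠ v3) (d24 : v2 ≠ v4)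
    (d34 : v3 ≠ v4)
    (e01 : G.Adj v0 v1) (e12 : G.Adj v1 v2) (e23 : G.Adj v2 v3) (e34 : G.Adj v3 v4)
    (e40 : G.Adj v4 v0)
    (n02 : ¬ G.Adj v0 v2) (n03 : ¬ G.Adj v0 v3) (n13 : ¬ G.Adj v1 v3)
    (n14 : ¬ G.Adj v1 v4) (n24 : ¬ G.Adj v2 v4) : HasHole G := by
  refine mkHole G 3 (le_refl _)
    (fun s => if s = 0 then v1 else if s = 1 then v2 else if s = 2 then v3 else v4) v0
    ?_ ?_ ?_ ?_
  · intro s t hs ht e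
    interval_cases s <;> interval_cases t <;> simp_all
  · intro s t hs ht
    interval_cases s <;> interval_cases t <;>
      simp_all [G.loopless, G.adj_comm v2 v1, G.adj_comm v3 v2, G.adj_comm v4 v3,
        G.adj_comm v3 v1, G.adj_comm v4 v1, G.adj_comm v4 v2]
  · intro s hs
    interval_cases s <;> simp_all [G.adj_comm v1 v0, G.adj_comm v4 v0]
  · intro s hs
    interval_cases s <;> simp_all [d01, d02, d03, d04]

/-- Core: an induced 4-cycle of `G ⊔ {f0f2}` using the new edge is impossible. -/
lemma c4_core {G : SimpleGraph V} (hG : AlmostChordal G) {f : ZMod 4 → V}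
    (hf : IsInducedCycle G f) (g : ZMod 4 → V)
    (hg : IsInducedCycle (G ⊔ SimpleGraph.fromEdgeSet {s(f 0, f 2)}) g)
    (i : ZMod 4) (hi0 : g i = f 0) (hi1 : g (i + 1) = f 2) : False := by
  obtain ⟨hab, hbc, hcd, hda, hnac, hnbd, d01, d02, d03, d12, d13, d23⟩ := c4_facts hf
  have adj' := adj_sup_edge (G := G) d02
  set x := g (i + 2) with hx
  set y := g (i + 3) with hy
  have cancel : ∀ p r : ZMod 4, (i + p = i + r) ↔ p = r :=
    fun p r => ⟨fun e => by linear_combination e, fun e => by rw [e]⟩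
  have gadj : ∀ p r : ZMod 4, ((G ⊔ SimpleGraph.fromEdgeSet {s(f 0, f 2)}).Adj
      (g (i + p)) (g (i + r)) ↔ (r = p + 1 ∨ p = r + 1)) := by
    intro p r
    rw [hg.2 (i + p) (i + r)]
    rw [show i + p + 1 = i + (p + 1) from by ring, show i + r + 1 = i + (r + 1) from by ring,
      cancel, cancel]
  have gne : ∀ p r : ZMod 4, p ≠ r → g (i + p) ≠ g (i + r) := by
    intro p r hpr e
    exact hpr ((cancel p r).mp (hg.1 e))
  have hia : g (i + 0) = f 0 := by rwa [add_zero]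
  -- G'-level adjacencies
  have ecx' := (gadj 1 2).mpr (by decide)
  have exy' := (gadj 2 3).mpr (by decide)
  have eya' := (gadj 3 0).mpr (by decide)
  have nax' : ¬ (G ⊔ SimpleGraph.fromEdgeSet {s(f 0, f 2)}).Adj (g (i + 0)) (g (i + 2)) :=
    fun hadj => absurd ((gadj 0 2).mp hadj) (by decide)
  have ncy' : ¬ (G ⊔ SimpleGraph.fromEdgeSet {s(f 0, f 2)}).Adj (g (i + 1)) (g (i + 3)) :=
    fun hadj => absurd ((gadj 1 3).mp hadj) (by decide)
  -- distinctness
  have xa : x ≠ f 0 := by rw [← hia]; exact gne 2 0 (by decide)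
  have xc : x ≠ f 2 := by rw [← hi1]; exact gne 2 1 (by decide)
  have ya : y ≠ f 0 := by rw [← hia]; exact gne 3 0 (by decide)
  have yc : y ≠ f 2 := by rw [← hi1]; exact gne 3 1 (by decide)
  have xy : x ≠ y := gne 2 3 (by decide)
  -- G-level adjacencies
  have toG : ∀ u v : V, (G ⊔ SimpleGraph.fromEdgeSet {s(f 0, f 2)}).Adj u v →
      ¬(u = f 0 ∧ v = f 2) → ¬(u = f 2 ∧ v = f 0) → G.Adj u v := by
    intro u v huv h1 h2
    rcases (adj' u v).mp huv with hg | he | he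
    · exact hg
    · exact absurd he h1
    · exact absurd he h2
  rw [hi1] at ecx' ncy'
  rw [hia] at eya' nax'
  have ecx : G.Adj (f 2) x :=
    toG (f 2) x ecx' (fun he => d02 he.1.symm) (fun he => xa he.2)
  have exy : G.Adj x y := toG _ _ exy' (fun he => xa he.1) (fun he => xc he.1)
  have eya : G.Adj y (f 0) := toG y (f 0) eya' (fun he => ya he.1) (fun he => yc he.1)
  have nax : ¬ G.Adj (f 0) x :=
    fun hh2 => nax' (SimpleGraph.sup_adj _ _ _ _ |>.mpr (Or.inl hh2))
  have ncy : ¬ G.Adj (f 2) y :=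
    fun hh2 => ncy' (SimpleGraph.sup_adj _ _ _ _ |>.mpr (Or.inl hh2))
  -- x, y are not on the 4-cycle f
  have xb : x ≠ f 1 := fun e => nax (e ▸ hab)
  have xd : x ≠ f 3 := fun e => nax (e ▸ hda.symm)
  have yb : y ≠ f 1 := fun e => ncy (e ▸ hbc.symm)
  have yd : y ≠ f 3 := fun e => ncy (e ▸ hcd)
  have xnotf : x ∉ Set.range f := by
    intro hxf
    rcases (mem_range_iff f x).mp hxf with h | h | h | h
    exacts [xa h, xb h, xc h, xd h]
  -- hole through a common neighbour of f0, f2 that misses x and y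
  have holeCase : ∀ u : V, G.Adj u (f 0) → G.Adj u (f 2) → u ≠ f 0 → u ≠ f 2 →
      u ≠ x → u ≠ y → ¬ G.Adj u x → ¬ G.Adj u y → False := by
    intro u hua huc una unc unx uny nux nuy
    exact hG.1 (mkHole5 G u (f 2) x y (f 0) unc unx uny una (fun e => xc e.symm)
      (fun e => yc e.symm) (fun e => d02 e.symm) xy xa ya
      huc ecx exy eya hua.symm nux nuy ncy (fun e => hnac e.symm) (fun e => nax e.symm))
  -- main case analysis
  have share : ∀ w0 w1 w2 w3 : V, IsInducedCycle G (c4fun w0 w1 w2 w3) →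
      ∀ z1 z2 : V, z1 ≠ z2 → z1 ∈ Set.range f → z2 ∈ Set.range f →
      z1 ∈ ({w0, w1, w2, w3} : Set V) → z2 ∈ ({w0, w1, w2, w3} : Set V) →
      x ∈ ({w0, w1, w2, w3} : Set V) → False := by
    intro w0 w1 w2 w3 hcyc z1 z2 hz hz1f hz2f hz1 hz2 hxmem
    have heq : Set.range f = {w0, w1, w2, w3} :=
      c4_eq hG ⟨f, hf, rfl⟩ ⟨_, hcyc, (range_c4fun _ _ _ _).symm⟩ hz hz1f hz1 hz2f hz2
    exact xnotf (heq ▸ hxmem)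
  by_cases hbx : G.Adj (f 1) x <;> by_cases hby : G.Adj (f 1) y
  · -- bx, by : case on f 3
    by_cases hdx : G.Adj (f 3) x <;> by_cases hdy : G.Adj (f 3) y
    · -- dx, dy : C4 (f0, f1, x, f3)
      refine share (f 0) (f 1) x (f 3)
        (mkC4 G _ _ _ _ d01 (fun e => xa e.symm) d03 (fun e => xb e.symm) d13 xd
          hab hbx hdx.symm hda nax hnbd)
        (f 0) (f 1) d01 ⟨0, rfl⟩ ⟨1, rfl⟩ (by simp) (by simp) (by simp)
    · -- dx, ¬dy : C4 (f0, f3, x, y)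
      refine share (f 0) (f 3) x y
        (mkC4 G _ _ _ _ d03 (fun e => xa e.symm) (fun e => ya e.symm) (fun e => xd e.symm)
          (fun e => yd e.symm) xy hda.symm hdx exy eya nax hdy)
        (f 0) (f 3) d03 ⟨0, rfl⟩ ⟨3, rfl⟩ (by simp) (by simp) (by simp)
    · -- ¬dx, dy : C4 (f2, f3, y, x)
      refine share (f 2) (f 3) y x
        (mkC4 G _ _ _ _ d23 (fun e => yc e.symm) (fun e => xc e.symm) (fun e => yd e.symm)
          (fun e => xd e.symm) (fun e => xy e.symm) hcd hdy exy.symm ecx.symm ncy hdx)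
        (f 2) (f 3) d23 ⟨2, rfl⟩ ⟨3, rfl⟩ (by simp) (by simp) (by simp)
    · -- ¬dx, ¬dy : hole through f 3
      exact holeCase (f 3) hda hcd.symm d03.symm d23.symm (fun e => xd e.symm)
        (fun e => yd e.symm) hdx hdy
  · -- bx, ¬by : C4 (f0, f1, x, y)
    refine share (f 0) (f 1) x y
      (mkC4 G _ _ _ _ d01 (fun e => xa e.symm) (fun e => ya e.symm) (fun e => xb e.symm)
        (fun e => yb e.symm) xy hab hbx exy eya nax hby)
      (f 0) (f 1) d01 ⟨0, rfl⟩ ⟨1, rfl⟩ (by simp) (by simp) (by simp)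
  · -- ¬bx, by : C4 (f1, f2, x, y)
    refine share (f 1) (f 2) x y
      (mkC4 G _ _ _ _ d12 (fun e => xb e.symm) (fun e => yb e.symm) (fun e => xc e.symm)
        (fun e => yc e.symm) xy hbc ecx exy hby.symm hbx ncy)
      (f 1) (f 2) d12 ⟨1, rfl⟩ ⟨2, rfl⟩ (by simp) (by simp) (by simp)
  · -- ¬bx, ¬by : hole through f 1
    exact holeCase (f 1) hab.symm hbc d01.symm d12 (fun e => xb e.symm)
      (fun e => yb e.symm) hbx hby

lemma c4_not_both {G : SimpleGraph V} (hG : AlmostChordal G) {f : ZMod 4 → V}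
    (hf : IsInducedCycle G f) (g : ZMod 4 → V)
    (hg : IsInducedCycle (G ⊔ SimpleGraph.fromEdgeSet {s(f 0, f 2)}) g) :
    ¬ (f 0 ∈ Set.range g ∧ f 2 ∈ Set.range g) := by
  rintro ⟨⟨i, hi⟩, ⟨j, hj⟩⟩
  obtain ⟨hab, hbc, hcd, hda, hnac, hnbd, d01, d02, d03, d12, d13, d23⟩ := c4_facts hf
  have adj' := adj_sup_edge (G := G) d02
  have hadjac : (G ⊔ SimpleGraph.fromEdgeSet {s(f 0, f 2)}).Adj (g i) (g j) := by
    rw [hi, hj]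
    exact (adj' _ _).mpr (Or.inr (Or.inl ⟨rfl, rfl⟩))
  rcases (hg.2 i j).mp hadjac with e | e
  · exact c4_core hG hf g hg i hi (by rw [← e]; exact hj)
  · refine c4_core hG hf (fun k => g (i + i - k)) (cyc_refl hg (i + i)) i ?_ ?_
    · show g (i + i - i) = f 0
      rw [show i + i - i = i from by ring]; exact hi
    · show g (i + i - (i + 1)) = f 2
      rw [show i + i - (i + 1) = j from by rw [e]; ring]; exact hj

lemma cycle_iff {G : SimpleGraph V} (hG : AlmostChordal G) {f : ZMod 4 → V}
    (hf : IsInducedCycle G f) (g : ZMod 4 → V) :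
    IsInducedCycle (G ⊔ SimpleGraph.fromEdgeSet {s(f 0, f 2)}) g ↔
      (IsInducedCycle G g ∧ Set.range g ≠ Set.range f) := by
  obtain ⟨hab, hbc, hcd, hda, hnac, hnbd, d01, d02, d03, d12, d13, d23⟩ := c4_facts hf
  have adj' := adj_sup_edge (G := G) d02
  constructor
  · intro hg'
    have hnb := c4_not_both hG hf g hg'
    have hgG : IsInducedCycle G g := by
      refine ⟨hg'.1, fun i j => ?_⟩
      rw [← hg'.2 i j]
      constructor
      · intro hx
        exact SimpleGraph.sup_adj _ _ _ _ |>.mpr (Or.inl hx)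
      · intro hx
        rcases (adj' _ _).mp hx with h | ⟨e1, e2⟩ | ⟨e1, e2⟩
        · exact h
        · exact absurd ⟨⟨i, e1⟩, ⟨j, e2⟩⟩ hnb
        · exact absurd ⟨⟨j, e2⟩, ⟨i, e1⟩⟩ hnb
    refine ⟨hgG, fun he => hnb ⟨?_, ?_⟩⟩
    · rw [he]; exact ⟨0, rfl⟩
    · rw [he]; exact ⟨2, rfl⟩
  · rintro ⟨hg, hne⟩
    have hnb : ¬ (f 0 ∈ Set.range g ∧ f 2 ∈ Set.range g) := by
      rintro ⟨h0, h2⟩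
      exact hne (c4_eq hG ⟨g, hg, rfl⟩ ⟨f, hf, rfl⟩ d02 h0 ⟨0, rfl⟩ h2 ⟨2, rfl⟩)
    refine ⟨hg.1, fun i j => ?_⟩
    constructor
    · intro hx
      rcases (adj' _ _).mp hx with h | ⟨e1, e2⟩ | ⟨e1, e2⟩
      · exact (hg.2 i j).mp h
      · exact absurd ⟨⟨i, e1⟩, ⟨j, e2⟩⟩ hnb
      · exact absurd ⟨⟨j, e2⟩, ⟨i, e1⟩⟩ hnb
    · intro hx
      exact SimpleGraph.sup_adj _ _ _ _ |>.mpr (Or.inl ((hg.2 i j).mpr hx))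

lemma aux_house {G : SimpleGraph V} (hG : AlmostChordal G) {f : ZMod 4 → V}
    (hf : IsInducedCycle G f) (g : ZMod 4 → V) (hgG : IsInducedCycle G g)
    (hg0 : g 0 = f 2) (hea : ∀ i, f 0 ≠ g i)
    (h1 : G.Adj (f 0) (g 1)) (h2 : ¬ G.Adj (f 0) (g 2)) (h3 : ¬ G.Adj (f 0) (g 3)) :
    False := by
  obtain ⟨hab, hbc, hcd, hda, hnac, hnbd, d01, d02, d03, d12, d13, d23⟩ := c4_facts hf
  obtain ⟨g01, g12, g23, g30, gn02, gn13, e01, e02, e03, e12', e13, e23'⟩ := c4_facts hgG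
  have h0 : ¬ G.Adj (f 0) (g 0) := by rw [hg0]; exact hnac
  have hnotg : ∀ u : V, u ∈ Set.range f → u ≠ f 2 → u ∉ Set.range g := by
    intro u huf huc hmem
    have heq : Set.range g = Set.range f :=
      c4_eq hG ⟨g, hgG, rfl⟩ ⟨f, hf, rfl⟩ huc hmem huf ⟨0, hg0⟩ ⟨2, rfl⟩
    have : f 0 ∈ Set.range g := by rw [heq]; exact ⟨0, rfl⟩
    obtain ⟨i, hi⟩ := this
    exact hea i hi.symm
  have hbg : f 1 ∉ Set.range g := hnotg (f 1) ⟨1, rfl⟩ d12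
  have hdg : f 3 ∉ Set.range g := hnotg (f 3) ⟨3, rfl⟩ d23.symm
  have hbgi : ∀ i, f 1 ≠ g i := fun i e => hbg ⟨i, e.symm⟩
  have hdgi : ∀ i, f 3 ≠ g i := fun i e => hdg ⟨i, e.symm⟩
  have g1nf : g 1 ∉ Set.range f := by
    intro hm
    rcases (mem_range_iff f _).mp hm with h | h | h | h
    · exact hea 1 h.symm
    · exact hbg ⟨1, h⟩
    · rw [← hg0] at h; exact e01 h.symm
    · exact hdg ⟨1, h⟩
  have g2nf : g 2 ∉ Set.range f := by
    intro hm
    rcases (mem_range_iff f _).mp hm with h | h | h | h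
    · exact hea 2 h.symm
    · exact hbg ⟨2, h⟩
    · rw [← hg0] at h; exact e02 h.symm
    · exact hdg ⟨2, h⟩
  have share : ∀ (h4 : ZMod 4 → V), IsInducedCycle G h4 → ∀ w0 w1 w2 w3 : V,
      IsInducedCycle G (c4fun w0 w1 w2 w3) → ∀ z1 z2 : V, z1 ≠ z2 →
      z1 ∈ Set.range h4 → z2 ∈ Set.range h4 →
      z1 ∈ ({w0, w1, w2, w3} : Set V) → z2 ∈ ({w0, w1, w2, w3} : Set V) →
      ∀ w, w ∈ ({w0, w1, w2, w3} : Set V) → w ∉ Set.range h4 → False := by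
    intro h4 hh4 w0 w1 w2 w3 hcyc z1 z2 hz hz1r hz2r hz1 hz2 w hw hwnot
    apply hwnot
    rw [c4_eq hG ⟨h4, hh4, rfl⟩ ⟨_, hcyc, (range_c4fun _ _ _ _).symm⟩ hz hz1r hz1 hz2r hz2]
    exact hw
  have hbg0 : G.Adj (f 1) (g 0) := by rw [hg0]; exact hbc
  have hdg0 : G.Adj (f 3) (g 0) := by rw [hg0]; exact hcd.symm
  by_cases hbg1 : G.Adj (f 1) (g 1)
  · by_cases hbg2 : G.Adj (f 1) (g 2) <;> by_cases hbg3 : G.Adj (f 1) (g 3)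
    · -- f1 adjacent to everything on g : look at f 3
      by_cases hdg1 : G.Adj (f 3) (g 1)
      · by_cases hdg2 : G.Adj (f 3) (g 2)
        · -- C4 (f0, f1, g2, f3)
          exact share f hf (f 0) (f 1) (g 2) (f 3)
            (mkC4 G _ _ _ _ d01 (hea 2) d03 (hbgi 2) d13 (fun e => hdgi 2 e.symm)
              hab hbg2 hdg2.symm hda h2 hnbd)
            (f 0) (f 1) d01 ⟨0, rfl⟩ ⟨1, rfl⟩ (by simp) (by simp) (g 2) (by simp) g2nf
        · by_cases hdg3 : G.Adj (f 3) (g 3)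
          · -- C4 (f3, g1, g2, g3) sharing g1, g2 with g
            exact share g hgG (f 3) (g 1) (g 2) (g 3)
              (mkC4 G _ _ _ _ (hdgi 1) (hdgi 2) (hdgi 3) e12' e13 e23'
                hdg1 g12 g23 hdg3.symm hdg2 gn13)
              (g 1) (g 2) e12' ⟨1, rfl⟩ ⟨2, rfl⟩ (by simp) (by simp) (f 3) (by simp) hdg
          · -- house (g, f 3)
            exact hG.2.1 ⟨g, f 3, hgG, hdgi, hdg0, hdg1, hdg2, hdg3⟩
      · -- C4 (f0, f3, g0, g1)
        exact share f hf (f 0) (f 3) (g 0) (g 1)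
          (mkC4 G _ _ _ _ d03 (hea 0) (hea 1) (hdgi 0) (hdgi 1) e01
            hda.symm hdg0 g01 h1.symm h0 hdg1)
          (f 0) (f 3) d03 ⟨0, rfl⟩ ⟨3, rfl⟩ (by simp) (by simp) (g 1) (by simp) g1nf
    · -- C4 (f1, g2, g3, g0) sharing g0, g2 with g
      exact share g hgG (f 1) (g 2) (g 3) (g 0)
        (mkC4 G _ _ _ _ (hbgi 2) (hbgi 3) (hbgi 0) e23' (fun e => e02 e.symm)
          (fun e => e03 e.symm) hbg2 g23 g30 hbg0.symm hbg3 (fun e => gn02 e.symm))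
        (g 0) (g 2) e02 ⟨0, rfl⟩ ⟨2, rfl⟩ (by simp) (by simp) (f 1) (by simp) hbg
    · -- C4 (f1, g1, g2, g3) sharing g1, g2 with g
      exact share g hgG (f 1) (g 1) (g 2) (g 3)
        (mkC4 G _ _ _ _ (hbgi 1) (hbgi 2) (hbgi 3) e12' e13 e23'
          hbg1 g12 g23 hbg3.symm hbg2 gn13)
        (g 1) (g 2) e12' ⟨1, rfl⟩ ⟨2, rfl⟩ (by simp) (by simp) (f 1) (by simp) hbg
    · -- house (g, f 1)
      exact hG.2.1 ⟨g, f 1, hgG, hbgi, hbg0, hbg1, hbg2, hbg3⟩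
  · -- C4 (f0, f1, g0, g1)
    exact share f hf (f 0) (f 1) (g 0) (g 1)
      (mkC4 G _ _ _ _ d01 (hea 0) (hea 1) (hbgi 0) (hbgi 1) e01
        hab hbg0 g01 h1.symm h0 hbg1)
      (f 0) (f 1) d01 ⟨0, rfl⟩ ⟨1, rfl⟩ (by simp) (by simp) (g 1) (by simp) g1nf

lemma no_house' {G : SimpleGraph V} (hG : AlmostChordal G) {f : ZMod 4 → V}
    (hf : IsInducedCycle G f) : ¬ HasHouse (G ⊔ SimpleGraph.fromEdgeSet {s(f 0, f 2)}) := by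
  rintro ⟨g, e, hg', hne, a0, a1, a2, a3⟩
  obtain ⟨hab, hbc, hcd, hda, hnac, hnbd, d01, d02, d03, d12, d13, d23⟩ := c4_facts hf
  have adj' := adj_sup_edge (G := G) d02
  obtain ⟨hgG, hrne⟩ := (cycle_iff hG hf g).mp hg'
  have hnb := c4_not_both hG hf g hg'
  by_cases hcase : (e = f 0 ∧ f 2 ∈ Set.range g) ∨ (e = f 2 ∧ f 0 ∈ Set.range g)
  · -- the house roof vertex is an endpoint of the added edge
    -- helper to convert the adjacencies of `e` to `G`
    rcases hcase with ⟨rfl, i0, hi0⟩ | ⟨rfl, i0, hi0⟩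
    · -- e = f 0, g i0 = f 2
      have toGe : ∀ i : ZMod 4, g i ≠ f 2 → (G ⊔ SimpleGraph.fromEdgeSet {s(f 0, f 2)}).Adj
          (f 0) (g i) → G.Adj (f 0) (g i) := by
        intro i hne2 hx
        rcases (adj' _ _).mp hx with h | ⟨e1, e2⟩ | ⟨e1, e2⟩
        · exact h
        · exact absurd e2 hne2
        · exact absurd e1 d02
      have hg23 : ∀ i : ZMod 4, ¬ (G ⊔ SimpleGraph.fromEdgeSet {s(f 0, f 2)}).Adj
          (f 0) (g i) → ¬ G.Adj (f 0) (g i) :=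
        fun i hx h => hx (SimpleGraph.sup_adj _ _ _ _ |>.mpr (Or.inl h))
      have hadj02 : (G ⊔ SimpleGraph.fromEdgeSet {s(f 0, f 2)}).Adj (f 0) (g i0) := by
        rw [hi0]
        exact (adj' _ _).mpr (Or.inr (Or.inl ⟨rfl, rfl⟩))
      have hi0ne2 : i0 ≠ 2 := fun h => a2 (h ▸ hadj02)
      have hi0ne3 : i0 ≠ 3 := fun h => a3 (h ▸ hadj02)
      rcases zmod4_cases i0 with rfl | rfl | h | h
      · -- f 2 = g 0
        refine aux_house hG hf g hgG hi0 hne ?_ ?_ ?_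
        · exact toGe 1 (fun h => (cyc_ne hgG (show (1 : ZMod 4) ≠ 0 by decide))
            (h.trans hi0.symm)) a1
        · exact hg23 2 a2
        · exact hg23 3 a3
      · -- f 2 = g 1 : reflect g around 1
        refine aux_house hG hf (fun k => g (1 - k)) (cyc_refl hgG 1) ?_
          (fun i => hne (1 - i)) ?_ ?_ ?_
        · show g (1 - 0) = f 2
          simpa using hi0
        · show G.Adj (f 0) (g (1 - 1))
          have : (1 - 1 : ZMod 4) = 0 := by decide
          rw [this]
          exact toGe 0 (fun h => (cyc_ne hgG (show (0 : ZMod 4) ≠ 1 by decide))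
            (h.trans hi0.symm)) a0
        · show ¬ G.Adj (f 0) (g (1 - 2))
          have : (1 - 2 : ZMod 4) = 3 := by decide
          rw [this]
          exact hg23 3 a3
        · show ¬ G.Adj (f 0) (g (1 - 3))
          have : (1 - 3 : ZMod 4) = 2 := by decide
          rw [this]
          exact hg23 2 a2
      · exact absurd h hi0ne2
      · exact absurd h hi0ne3
    · -- e = f 2, g i0 = f 0 : use the rotated 4-cycle f' = f (· + 2)
      have hf' := cyc_rot hf 2
      have hf'0 : f ((0 : ZMod 4) + 2) = f 2 := rfl
      have hf'2 : f ((2 : ZMod 4) + 2) = f 0 := congrArg f (by decide)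
      have toGe : ∀ i : ZMod 4, g i ≠ f 0 → (G ⊔ SimpleGraph.fromEdgeSet {s(f 0, f 2)}).Adj
          (f 2) (g i) → G.Adj (f 2) (g i) := by
        intro i hne2 hx
        rcases (adj' _ _).mp hx with h | ⟨e1, e2⟩ | ⟨e1, e2⟩
        · exact h
        · exact absurd e1 d02.symm
        · exact absurd e2 hne2
      have hg23 : ∀ i : ZMod 4, ¬ (G ⊔ SimpleGraph.fromEdgeSet {s(f 0, f 2)}).Adj
          (f 2) (g i) → ¬ G.Adj (f 2) (g i) :=
        fun i hx h => hx (SimpleGraph.sup_adj _ _ _ _ |>.mpr (Or.inl h))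
      have hadj02 : (G ⊔ SimpleGraph.fromEdgeSet {s(f 0, f 2)}).Adj (f 2) (g i0) := by
        rw [hi0]
        exact (adj' _ _).mpr (Or.inr (Or.inr ⟨rfl, rfl⟩))
      have hi0ne2 : i0 ≠ 2 := fun h => a2 (h ▸ hadj02)
      have hi0ne3 : i0 ≠ 3 := fun h => a3 (h ▸ hadj02)
      rcases zmod4_cases i0 with rfl | rfl | h | h
      · refine aux_house hG hf' g hgG (by rw [hf'2]; exact hi0) (fun i => by rw [hf'0]; exact hne i) ?_ ?_ ?_
        · rw [hf'0]
          exact toGe 1 (fun h => (cyc_ne hgG (show (1 : ZMod 4) ≠ 0 by decide))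
            (h.trans hi0.symm)) a1
        · rw [hf'0]
          exact hg23 2 a2
        · rw [hf'0]
          exact hg23 3 a3
      · refine aux_house hG hf' (fun k => g (1 - k)) (cyc_refl hgG 1) ?_
          (fun i => by rw [hf'0]; exact hne (1 - i)) ?_ ?_ ?_
        · show g (1 - 0) = f ((2 : ZMod 4) + 2)
          rw [hf'2]
          simpa using hi0
        · show G.Adj (f ((0 : ZMod 4) + 2)) (g (1 - 1))
          rw [hf'0, show (1 - 1 : ZMod 4) = 0 from by decide]
          exact toGe 0 (fun h => (cyc_ne hgG (show (0 : ZMod 4) ≠ 1 by decide))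
            (h.trans hi0.symm)) a0
        · show ¬ G.Adj (f ((0 : ZMod 4) + 2)) (g (1 - 2))
          rw [hf'0, show (1 - 2 : ZMod 4) = 3 from by decide]
          exact hg23 3 a3
        · show ¬ G.Adj (f ((0 : ZMod 4) + 2)) (g (1 - 3))
          rw [hf'0, show (1 - 3 : ZMod 4) = 2 from by decide]
          exact hg23 2 a2
      · exact absurd h hi0ne2
      · exact absurd h hi0ne3
  · -- the roof vertex is untouched : house in G
    have convert : ∀ i : ZMod 4, ((G ⊔ SimpleGraph.fromEdgeSet {s(f 0, f 2)}).Adj e (g i) ↔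
        G.Adj e (g i)) := by
      intro i
      constructor
      · intro hx
        rcases (adj' _ _).mp hx with h | ⟨e1, e2⟩ | ⟨e1, e2⟩
        · exact h
        · exact absurd (Or.inl ⟨e1, ⟨i, e2⟩⟩) hcase
        · exact absurd (Or.inr ⟨e1, ⟨i, e2⟩⟩) hcase
      · intro hx
        exact SimpleGraph.sup_adj _ _ _ _ |>.mpr (Or.inl hx)
    exact hG.2.1 ⟨g, e, hgG, hne, (convert 0).mp a0, (convert 1).mp a1,
      fun h => a2 ((convert 2).mpr h), fun h => a3 ((convert 3).mpr h)⟩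

/-- Adding the chord `v₁v₃` to an induced 4-cycle of an almost-chordal graph keeps the graph
almost-chordal and destroys exactly this one induced 4-cycle (STATEMENT 7). -/
theorem almost_chordal_add_chord [Fintype V] [DecidableEq V]
    (G : SimpleGraph V) (hG : AlmostChordal G)
    (f : ZMod 4 → V) (hf : IsInducedCycle G f) :
    AlmostChordal (G ⊔ SimpleGraph.fromEdgeSet {s(f 0, f 2)}) ∧
    (∀ g : ZMod 4 → V,
      IsInducedCycle (G ⊔ SimpleGraph.fromEdgeSet {s(f 0, f 2)}) g ↔
        (IsInducedCycle G g ∧ Set.range g ≠ Set.range f)) ∧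
    {s : Set V | IsC4Set (G ⊔ SimpleGraph.fromEdgeSet {s(f 0, f 2)}) s}.ncard + 1 =
      {s : Set V | IsC4Set G s}.ncard := by
  obtain ⟨hab, hbc, hcd, hda, hnac, hnbd, d01, d02, d03, d12, d13, d23⟩ := c4_facts hf
  have hAC : AlmostChordal (G ⊔ SimpleGraph.fromEdgeSet {s(f 0, f 2)}) := by
    refine ⟨no_hole' hG hf, no_house' hG hf, ?_⟩
    intro s t hs ht hst
    obtain ⟨gs, hgs, rfl⟩ := hs
    obtain ⟨gt, hgt, rfl⟩ := ht
    exact hG.2.2 _ _ ⟨gs, ((cycle_iff hG hf gs).mp hgs).1, rfl⟩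
      ⟨gt, ((cycle_iff hG hf gt).mp hgt).1, rfl⟩ hst
  refine ⟨hAC, fun g => cycle_iff hG hf g, ?_⟩
  have hsetEq : {s : Set V | IsC4Set (G ⊔ SimpleGraph.fromEdgeSet {s(f 0, f 2)}) s} =
      {s : Set V | IsC4Set G s} \ {Set.range f} := by
    ext s
    simp only [Set.mem_setOf_eq, Set.mem_diff, Set.mem_singleton_iff]
    constructor
    · rintro ⟨g, hg, rfl⟩
      obtain ⟨h1, h2⟩ := (cycle_iff hG hf g).mp hg
      exact ⟨⟨g, h1, rfl⟩, h2⟩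
    · rintro ⟨⟨g, hg, rfl⟩, hne⟩
      exact ⟨g, (cycle_iff hG hf g).mpr ⟨hg, hne⟩, rfl⟩
  rw [hsetEq]
  exact Set.ncard_diff_singleton_add_one (⟨f, hf, rfl⟩ : IsC4Set G (Set.range f))
    (Set.toFinite _)
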